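/- Let L be a finite distributive lattice, I ⊆ L a poset ideal and J ⊆ L a poset coideal. Then (H_I ∩ H_J)* = (H_L)* + ( ∏_{r ∈ G(ℓ(q))} y_r : q ∈ L∖I ) + ( ∏_{r ∈ G(ℓ(q)^c)} x_r : q ∈ L∖J ), where ℓ(q)^c = P∖ℓ(q) is a poset coideal of P, G(ℓ(q)) is the set of maximal elements of the poset ideal ℓ(q), and G(ℓ(q)^c) is the set of minimal elements of ℓ(q)^c. -/

import Mathlib

open MvPolynomial

def JoinIrred {L : Type*} [Preorder L] (p : L) : Prop := ¬ IsLUB {q | q < p} p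

open Classical in
/-- The squarefree monomial `u_q = (∏_{p ∈ ℓ(q)} x_p)(∏_{p ∈ P∖ℓ(q)} y_p)`;
`x_p` is `X (Sum.inl p)` and `y_p` is `X (Sum.inr p)`. -/
noncomputable def uMon {L : Type*} [Preorder L] [Fintype L] (F : Type*) [Field F] (q : L) :
    MvPolynomial ({p : L // JoinIrred p} ⊕ {p : L // JoinIrred p}) F :=
  ∏ p : {p : L // JoinIrred p},
    if (p : L) ≤ q then X (Sum.inl p) else X (Sum.inr p)

open Classical in
/-- The *Alexander dual* of a squarefree monomial ideal `I`: the ideal generated by all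
squarefree monomials whose support meets the support of every squarefree monomial in `I`
(equivalently, of every minimal monomial generator of `I`). -/
noncomputable def dualIdeal {σ F : Type*} [Field F] (I : Ideal (MvPolynomial σ F)) :
    Ideal (MvPolynomial σ F) :=
  Ideal.span {m | ∃ T : Finset σ, m = ∏ s ∈ T, X s ∧
    ∀ T' : Finset σ, (∏ s ∈ T', X s : MvPolynomial σ F) ∈ I → (T ∩ T').Nonempty}

open Classical in
/-- The squarefree monomial `∏_{r ∈ G(ℓ(q))} y_r`, where `G(ℓ(q))` is the set of maximal
elements (generators) of the poset ideal `ℓ(q) ⊆ P`. -/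
noncomputable def yGen {L : Type*} [Preorder L] [Fintype L] (F : Type*) [Field F] (q : L) :
    MvPolynomial ({p : L // JoinIrred p} ⊕ {p : L // JoinIrred p}) F :=
  ∏ r : {p : L // JoinIrred p},
    if ((r : L) ≤ q ∧ ∀ r' : {p : L // JoinIrred p}, (r' : L) ≤ q → r ≤ r' → r' = r)
    then X (Sum.inr r) else 1

open Classical in
/-- The squarefree monomial `∏_{r ∈ G(ℓ(q)^c)} x_r`, where `G(ℓ(q)^c)` is the set of
minimal elements (cogenerators) of the poset coideal `ℓ(q)^c = P ∖ ℓ(q)`. -/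
noncomputable def xGen {L : Type*} [Preorder L] [Fintype L] (F : Type*) [Field F] (q : L) :
    MvPolynomial ({p : L // JoinIrred p} ⊕ {p : L // JoinIrred p}) F :=
  ∏ r : {p : L // JoinIrred p},
    if (¬ (r : L) ≤ q ∧ ∀ r' : {p : L // JoinIrred p}, ¬ (r' : L) ≤ q → r' ≤ r → r' = r)
    then X (Sum.inl r) else 1


set_option linter.unusedSectionVars false
section auxdefs

open Finset

variable {L : Type*} [Fintype L] [DistribLattice L]

local notation "P" => {p : L // JoinIrred p}

lemma joinIrred_le_sup {p a b : L} (hp : JoinIrred p) (h : p ≤ a ⊔ b) : p ≤ a ∨ p ≤ b := by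
  by_contra hc
  push_neg at hc
  apply hp
  have hpa : p ⊓ a < p := lt_of_le_of_ne inf_le_left (fun he => hc.1 (he ▸ inf_le_right))
  have hpb : p ⊓ b < p := lt_of_le_of_ne inf_le_left (fun he => hc.2 (he ▸ inf_le_right))
  have hpe : p = (p ⊓ a) ⊔ (p ⊓ b) := by
    rw [← inf_sup_left]
    exact (inf_eq_left.mpr h).symm
  constructor
  · intro r hr; exact le_of_lt hr
  · intro u hu
    calc p = (p ⊓ a) ⊔ (p ⊓ b) := hpe
    _ ≤ u := sup_le (hu hpa) (hu hpb)

lemma birkhoff_le {q q' : L}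
    (h : ∀ p : L, JoinIrred p → p ≤ q → p ≤ q') : q ≤ q' := by
  by_contra hq
  obtain ⟨m, hmq, hmin⟩ := Finite.exists_le_minimal
    (p := fun x : L => ¬ x ≤ q' ∧ ∀ p : L, JoinIrred p → p ≤ x → p ≤ q') (a := q) ⟨hq, h⟩
  obtain ⟨hm1, hm2⟩ := hmin.1
  have hmJI : ¬ JoinIrred m := fun hJ => hm1 (hm2 m hJ le_rfl)
  rw [JoinIrred, not_not] at hmJI
  apply hm1
  have hub : m ⊓ q' ∈ upperBounds {r : L | r < m} := by
    intro r hr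
    have hrq' : r ≤ q' := by
      by_contra hrq'
      have := hmin.2 ⟨hrq', fun p hp hpr => hm2 p hp (hpr.trans hr.le)⟩ hr.le
      exact absurd (le_antisymm hr.le this) (ne_of_lt hr)
    exact le_inf hr.le hrq'
  exact (hmJI.2 hub).trans inf_le_right

open Classical in
lemma exists_ell [Nonempty L] (K : Finset P)
    (hK : ∀ p ∈ K, ∀ p' : P, (p' : L) ≤ (p : L) → p' ∈ K) :
    ∃ q : L, ∀ p : P, (p : L) ≤ q ↔ p ∈ K := by
  classical
  set b : L := Finset.inf' Finset.univ univ_nonempty id with hbdef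
  have hb : ∀ x : L, b ≤ x := fun x => Finset.inf'_le id (mem_univ x)
  have hbJI : ∀ p : P, ¬ (p : L) ≤ b := by
    rintro ⟨p, hp⟩ hpb
    have hpeb : p = b := le_antisymm hpb (hb p)
    apply hp
    constructor
    · intro r hr; exact hr.le
    · intro u _; rw [hpeb]; exact hb u
  refine ⟨K.fold (· ⊔ · : L → L → L) b (fun p => p.1), fun p => ?_⟩
  have key : ∀ (s : Finset P),
      ((p : L) ≤ s.fold (· ⊔ · : L → L → L) b (fun p => p.1) ↔
        (p : L) ≤ b ∨ ∃ k ∈ s, (p : L) ≤ (k : L)) := by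
    intro s
    induction s using Finset.induction_on with
    | empty => simp
    | insert _ _ hns ih =>
      rename_i a s
      rw [Finset.fold_insert hns]
      constructor
      · intro h
        rcases joinIrred_le_sup p.2 h with h1 | h2
        · exact Or.inr ⟨a, mem_insert_self a s, h1⟩
        · rcases ih.mp h2 with h3 | ⟨k, hk, hpk⟩
          · exact Or.inl h3
          · exact Or.inr ⟨k, mem_insert_of_mem hk, hpk⟩
      · rintro (h | ⟨k, hk, hpk⟩)
        · exact le_trans h (le_trans (hb _) le_sup_right)
        · rcases Finset.mem_insert.mp hk with rfl | hk'
          · exact le_sup_left.trans' hpk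
          · refine le_sup_right.trans' (ih.mpr (Or.inr ⟨k, hk', hpk⟩))
  rw [key]
  constructor
  · rintro (h | ⟨k, hk, hpk⟩)
    · exact absurd h (hbJI p)
    · exact hK k hk p hpk
  · intro h; exact Or.inr ⟨p, h, le_rfl⟩

open Classical in
noncomputable def Su (q : L) : Finset (P ⊕ P) :=
  ((Finset.univ.filter fun p : P => (p : L) ≤ q).image Sum.inl) ∪
    ((Finset.univ.filter fun p : P => ¬ (p : L) ≤ q).image Sum.inr)

open Classical in
lemma inl_mem_Su {q : L} {p : P} : Sum.inl p ∈ Su q ↔ (p : L) ≤ q := by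
  simp [Su]

open Classical in
lemma inr_mem_Su {q : L} {p : P} : Sum.inr p ∈ Su q ↔ ¬ (p : L) ≤ q := by
  simp [Su]

/-- The generator condition for `yGen`. -/
def cy (q : L) (r : P) : Prop :=
  (r : L) ≤ q ∧ ∀ r' : P, (r' : L) ≤ q → r ≤ r' → r' = r

/-- The generator condition for `xGen`. -/
def cx (q : L) (r : P) : Prop :=
  ¬ (r : L) ≤ q ∧ ∀ r' : P, ¬ (r' : L) ≤ q → r' ≤ r → r' = r

open Classical in
noncomputable def Ty (q : L) : Finset (P ⊕ P) :=
  (Finset.univ.filter fun r : P => cy q r).image Sum.inr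

open Classical in
noncomputable def Tx (q : L) : Finset (P ⊕ P) :=
  (Finset.univ.filter fun r : P => cx q r).image Sum.inl

open Classical in
lemma mem_Ty {q : L} {s : P ⊕ P} : s ∈ Ty q ↔ ∃ r : P, cy q r ∧ s = Sum.inr r := by
  simp [Ty, eq_comm]

open Classical in
lemma mem_Tx {q : L} {s : P ⊕ P} : s ∈ Tx q ↔ ∃ r : P, cx q r ∧ s = Sum.inl r := by
  simp [Tx, eq_comm]

end auxdefs

section monomials
open MvPolynomial Finset

variable {σ : Type*} {F : Type*} [Field F]

noncomputable def degT (T : Finset σ) : σ →₀ ℕ := ∑ s ∈ T, Finsupp.single s 1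

lemma degT_apply [DecidableEq σ] (T : Finset σ) (a : σ) :
    degT T a = if a ∈ T then 1 else 0 := by
  rw [degT, Finset.sum_apply']
  simp [Finsupp.single_apply]

lemma degT_le_iff {S T : Finset σ} : degT S ≤ degT T ↔ S ⊆ T := by
  classical
  rw [Finsupp.le_def]
  constructor
  · intro h s hs
    have := h s
    rw [degT_apply, degT_apply, if_pos hs] at this
    by_contra hsT
    rw [if_neg hsT] at this
    omega
  · intro h a
    rw [degT_apply, degT_apply]
    by_cases h1 : a ∈ S
    · rw [if_pos h1, if_pos (h h1)]
    · rw [if_neg h1]; omega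

lemma prodX_eq (T : Finset σ) : (∏ s ∈ T, X s : MvPolynomial σ F) = monomial (degT T) 1 := by
  classical
  induction T using Finset.induction_on with
  | empty => simp [degT]
  | insert _ _ h ih =>
    rename_i a s
    rw [Finset.prod_insert h, ih, X, monomial_mul, one_mul]
    congr 1
    simp only [degT, Finset.sum_insert h]

lemma prodX_mem_span_iff {G : Set (Finset σ)} {T : Finset σ} :
    (∏ s ∈ T, X s : MvPolynomial σ F) ∈
        Ideal.span ((fun S => ∏ s ∈ S, X s : Finset σ → MvPolynomial σ F) '' G) ↔
      ∃ S ∈ G, S ⊆ T := by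
  classical
  have himg : ((fun S => ∏ s ∈ S, X s : Finset σ → MvPolynomial σ F) '' G) =
      (fun d => monomial d (1 : F)) '' (degT '' G) := by
    rw [Set.image_image]
    exact Set.image_congr' (fun S => prodX_eq S)
  rw [himg, prodX_eq, mem_ideal_span_monomial_image]
  rw [support_monomial, if_neg (one_ne_zero)]
  simp only [Finset.mem_singleton, forall_eq, Set.mem_image, exists_exists_and_eq_and]
  exact exists_congr fun S => and_congr_right fun _ => degT_le_iff

end monomials

section bridge
open MvPolynomial Finset

variable {L : Type*} [Fintype L] [DistribLattice L] {F : Type*} [Field F]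

local notation "P" => {p : L // JoinIrred p}

open Classical in
lemma uMon_eq (q : L) : uMon F q = ∏ s ∈ Su q, X s := by
  rw [uMon, Su, Finset.prod_union (by simp [Finset.disjoint_left]),
    Finset.prod_image (by simp), Finset.prod_image (by simp), ← Finset.prod_ite]

open Classical in
lemma yGen_eq (q : L) : yGen F q = ∏ s ∈ Ty q, X s := by
  rw [yGen, Ty, Finset.prod_image (by simp), Finset.prod_filter]
  exact Finset.prod_congr rfl fun r _ => if_congr Iff.rfl rfl rfl

open Classical in
lemma xGen_eq (q : L) : xGen F q = ∏ s ∈ Tx q, X s := by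
  rw [xGen, Tx, Finset.prod_image (by simp), Finset.prod_filter]
  exact Finset.prod_congr rfl fun r _ => if_congr Iff.rfl rfl rfl

open Classical in
lemma mem_span_uMon_iff {M : Set L} {T : Finset (P ⊕ P)} :
    (∏ s ∈ T, X s : MvPolynomial (P ⊕ P) F) ∈ Ideal.span (uMon F '' M) ↔
      ∃ q ∈ M, Su q ⊆ T := by
  have himg : uMon F '' M = (fun S => ∏ s ∈ S, X s : Finset (P ⊕ P) → MvPolynomial (P ⊕ P) F) '' (Su '' M) := by
    rw [Set.image_image]; exact Set.image_congr' uMon_eq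
  rw [himg, prodX_mem_span_iff]
  simp only [Set.mem_image, exists_exists_and_eq_and]

open Classical in
lemma mem_inter_cl {α : Type*} {s t : Finset α} {a : α} :
    a ∈ s ∩ t ↔ a ∈ s ∧ a ∈ t := Finset.mem_inter

end bridge

open Classical Finset

/-- Proposition 4.7(b): for a poset ideal `I` and a poset coideal `J` of a finite
distributive lattice `L`,
`(H_I ∩ H_J)* = ((H_L)*, {∏_{r ∈ G(ℓ(q))} y_r : q ∈ L∖I}, {∏_{r ∈ G(ℓ(q)^c)} x_r : q ∈ L∖J})`. -/
theorem stmt16 {L : Type*} [Fintype L] [DistribLattice L] (F : Type*) [Field F]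
    (I J : Set L) (hI : IsLowerSet I) (hJ : IsUpperSet J) :
    dualIdeal (Ideal.span (uMon F '' I) ⊓ Ideal.span (uMon F '' J)) =
      dualIdeal (Ideal.span (uMon F '' (Set.univ : Set L))) ⊔
        Ideal.span {m | ∃ q ∈ Iᶜ, m = yGen F q} ⊔
        Ideal.span {m | ∃ q ∈ Jᶜ, m = xGen F q} := by
  classical
  apply le_antisymm
  · rw [dualIdeal]
    refine Ideal.span_le.mpr ?_
    rintro m ⟨T, rfl, hT⟩
    by_cases hN : ∃ q : L, ∀ s ∈ Su q, s ∉ T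
    case neg =>
      push_neg at hN
      apply Ideal.mem_sup_left
      apply Ideal.mem_sup_left
      rw [dualIdeal]
      refine Ideal.subset_span ⟨T, rfl, fun T' hT' => ?_⟩
      obtain ⟨q, -, hsub⟩ := mem_span_uMon_iff.mp hT'
      obtain ⟨s, hs1, hs2⟩ := hN q
      exact ⟨s, mem_inter_cl.mpr ⟨hs2, hsub hs1⟩⟩
    case pos =>
      obtain ⟨q₀, hq₀⟩ := hN
      have : Nonempty L := ⟨q₀⟩
      set NP : L → Prop := fun q => ∀ s ∈ Su q, s ∉ T with hNPdef
      have hNPinf : ∀ a, NP a → ∀ b, NP b → NP (a ⊓ b) := by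
        intro a ha b hb s hs
        match s with
        | Sum.inl p =>
          rw [inl_mem_Su] at hs
          exact ha _ (inl_mem_Su.mpr (hs.trans inf_le_left))
        | Sum.inr p =>
          rw [inr_mem_Su] at hs
          by_cases hpa : (p : L) ≤ a
          · exact hb _ (inr_mem_Su.mpr (fun h => hs (le_inf hpa h)))
          · exact ha _ (inr_mem_Su.mpr hpa)
      have hNPsup : ∀ a, NP a → ∀ b, NP b → NP (a ⊔ b) := by
        intro a ha b hb s hs
        match s with
        | Sum.inl p =>
          rw [inl_mem_Su] at hs
          rcases joinIrred_le_sup p.2 hs with h | h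
          · exact ha _ (inl_mem_Su.mpr h)
          · exact hb _ (inl_mem_Su.mpr h)
        | Sum.inr p =>
          rw [inr_mem_Su] at hs
          exact ha _ (inr_mem_Su.mpr (fun h => hs (h.trans le_sup_left)))
      set NF : Finset L := univ.filter NP with hNFdef
      have hNFmem : ∀ q : L, q ∈ NF ↔ NP q := by
        intro q; rw [hNFdef, Finset.mem_filter]; simp
      have hNFne : NF.Nonempty := ⟨q₀, (hNFmem q₀).mpr hq₀⟩
      set qmin := NF.inf' hNFne id with hqmindef
      set qmax := NF.sup' hNFne id with hqmaxdef
      have hminNP : NP qmin :=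
        Finset.inf'_induction hNFne id hNPinf (fun b hb => (hNFmem b).mp hb)
      have hmaxNP : NP qmax :=
        Finset.sup'_induction hNFne id hNPsup (fun b hb => (hNFmem b).mp hb)
      have hqminle : ∀ q : L, NP q → qmin ≤ q :=
        fun q h => Finset.inf'_le id ((hNFmem q).mpr h)
      have hqmaxge : ∀ q : L, NP q → q ≤ qmax :=
        fun q h => Finset.le_sup' id ((hNFmem q).mpr h)
      have hkey : qmin ∉ I ∨ qmax ∉ J := by
        by_contra hc
        push_neg at hc
        have hmem : (∏ s ∈ (Su qmin ∪ Su qmax), X s : MvPolynomial _ F) ∈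
            Ideal.span (uMon F '' I) ⊓ Ideal.span (uMon F '' J) := by
          rw [Submodule.mem_inf]
          constructor
          · rw [mem_span_uMon_iff]
            exact ⟨qmin, hc.1, Finset.subset_union_left⟩
          · rw [mem_span_uMon_iff]
            exact ⟨qmax, hc.2, Finset.subset_union_right⟩
        obtain ⟨s, hs⟩ := hT _ hmem
        rw [mem_inter_cl] at hs
        rcases Finset.mem_union.mp hs.2 with h | h
        · exact hminNP s h hs.1
        · exact hmaxNP s h hs.1
      by_cases hqI : qmin ∈ I
      · have hqJ : qmax ∉ J := hkey.resolve_left (not_not_intro hqI)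
        have hTx : Tx qmax ⊆ T := by
          intro s hs
          obtain ⟨r, hr, rfl⟩ := mem_Tx.mp hs
          by_contra hrT
          obtain ⟨q'', hq''⟩ := exists_ell
            (univ.filter fun p : {p : L // JoinIrred p} => (p : L) ≤ qmax ∨ p = r)
            (by
              intro p hp p' hple
              rw [Finset.mem_filter] at hp ⊢
              refine ⟨mem_univ _, ?_⟩
              rcases hp.2 with h | heq
              · exact Or.inl (hple.trans h)
              · subst heq
                by_cases h2 : (p' : L) ≤ qmax
                · exact Or.inl h2
                · exact Or.inr (hr.2 p' h2 hple))
          have hq''NP : NP q'' := by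
            intro s hs
            match s with
            | Sum.inl p =>
              rw [inl_mem_Su] at hs
              have := Finset.mem_filter.mp ((hq'' p).mp hs)
              rcases this.2 with h | rfl
              · exact hmaxNP _ (inl_mem_Su.mpr h)
              · exact hrT
            | Sum.inr p =>
              rw [inr_mem_Su] at hs
              have hnle : ¬ (p : L) ≤ qmax := fun h =>
                hs ((hq'' p).mpr (Finset.mem_filter.mpr ⟨mem_univ _, Or.inl h⟩))
              exact hmaxNP _ (inr_mem_Su.mpr hnle)
          have h1 : q'' ≤ qmax := hqmaxge _ hq''NP
          have h2 : (r : L) ≤ q'' :=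
            (hq'' r).mpr (Finset.mem_filter.mpr ⟨mem_univ _, Or.inr rfl⟩)
          exact hr.1 (h2.trans h1)
        apply Ideal.mem_sup_right
        rw [← Finset.prod_sdiff hTx]
        refine Ideal.mul_mem_left _ _ ?_
        rw [← xGen_eq]
        exact Ideal.subset_span ⟨qmax, hqJ, rfl⟩
      · have hTy : Ty qmin ⊆ T := by
          intro s hs
          obtain ⟨r, hr, rfl⟩ := mem_Ty.mp hs
          by_contra hrT
          obtain ⟨q', hq'⟩ := exists_ell
            (univ.filter fun p : {p : L // JoinIrred p} => (p : L) ≤ qmin ∧ p ≠ r)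
            (by
              intro p hp p' hple
              rw [Finset.mem_filter] at hp ⊢
              refine ⟨mem_univ _, hple.trans hp.2.1, ?_⟩
              rintro rfl
              exact hp.2.2 (hr.2 p hp.2.1 hple))
          have hq'NP : NP q' := by
            intro s hs
            match s with
            | Sum.inl p =>
              rw [inl_mem_Su] at hs
              have := Finset.mem_filter.mp ((hq' p).mp hs)
              exact hminNP _ (inl_mem_Su.mpr this.2.1)
            | Sum.inr p =>
              rw [inr_mem_Su] at hs
              by_cases hple : (p : L) ≤ qmin
              · have hpr : p = r := by
                  by_contra hne
                  exact hs ((hq' p).mpr (Finset.mem_filter.mpr ⟨mem_univ _, hple, hne⟩))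
                subst hpr
                exact hrT
              · exact hminNP _ (inr_mem_Su.mpr hple)
          have h1 : qmin ≤ q' := hqminle _ hq'NP
          have h2 : ¬ (r : L) ≤ q' := fun h =>
            (Finset.mem_filter.mp ((hq' r).mp h)).2.2 rfl
          exact h2 (hr.1.trans h1)
        apply Ideal.mem_sup_left
        apply Ideal.mem_sup_right
        rw [← Finset.prod_sdiff hTy]
        refine Ideal.mul_mem_left _ _ ?_
        rw [← yGen_eq]
        exact Ideal.subset_span ⟨qmin, hqI, rfl⟩
  · refine sup_le (sup_le ?_ ?_) ?_
    · rw [dualIdeal, dualIdeal]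
      refine Ideal.span_le.mpr ?_
      rintro m ⟨T, rfl, h⟩
      have hle : Ideal.span (uMon F '' I) ⊓ Ideal.span (uMon F '' J) ≤
          Ideal.span (uMon F '' (Set.univ : Set L)) :=
        inf_le_left.trans (Ideal.span_mono (Set.image_mono (Set.subset_univ I)))
      exact Ideal.subset_span ⟨T, rfl, fun T' hT' => h T' (hle hT')⟩
    · refine Ideal.span_le.mpr ?_
      rintro m ⟨q, hq, rfl⟩
      rw [dualIdeal]
      refine Ideal.subset_span ⟨Ty q, yGen_eq q, fun T' hT' => ?_⟩
      rw [Submodule.mem_inf] at hT'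
      obtain ⟨a, haI, hsub⟩ := mem_span_uMon_iff.mp hT'.1
      have hex : ∃ r : {p : L // JoinIrred p}, cy q r ∧ ¬ (r : L) ≤ a := by
        by_contra hc
        push_neg at hc
        apply hq
        refine hI (birkhoff_le fun p hp hpq => ?_) haI
        obtain ⟨r, hpr, hrmax⟩ := Finite.exists_le_maximal
          (p := fun x : {p : L // JoinIrred p} => (x : L) ≤ q) (a := ⟨p, hp⟩) hpq
        have hcy : cy q r := ⟨hrmax.1, fun r' h1 h2 => le_antisymm (hrmax.2 h1 h2) h2⟩
        exact le_trans (Subtype.coe_le_coe.mpr hpr) (hc r hcy)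
      obtain ⟨r, hcy, hra⟩ := hex
      exact ⟨Sum.inr r, mem_inter_cl.mpr
        ⟨mem_Ty.mpr ⟨r, hcy, rfl⟩, hsub (inr_mem_Su.mpr hra)⟩⟩
    · refine Ideal.span_le.mpr ?_
      rintro m ⟨q, hq, rfl⟩
      rw [dualIdeal]
      refine Ideal.subset_span ⟨Tx q, xGen_eq q, fun T' hT' => ?_⟩
      rw [Submodule.mem_inf] at hT'
      obtain ⟨b, hbJ, hsub⟩ := mem_span_uMon_iff.mp hT'.2
      have hex : ∃ r : {p : L // JoinIrred p}, cx q r ∧ (r : L) ≤ b := by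
        by_contra hc
        push_neg at hc
        apply hq
        refine hJ (birkhoff_le (q := b) (q' := q) fun p hp hpb => ?_) hbJ
        by_contra hpq
        obtain ⟨r, hrp, hrmin⟩ := Finite.exists_le_minimal
          (p := fun x : {p : L // JoinIrred p} => ¬ (x : L) ≤ q) (a := ⟨p, hp⟩) hpq
        have hcx : cx q r := ⟨hrmin.1, fun r' h1 h2 => le_antisymm h2 (hrmin.2 h1 h2)⟩
        exact hc r hcx ((Subtype.coe_le_coe.mpr hrp).trans hpb)
      obtain ⟨r, hcx, hrb⟩ := hex
      exact ⟨Sum.inl r, mem_inter_cl.mpr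
        ⟨mem_Tx.mpr ⟨r, hcx, rfl⟩, hsub (inl_mem_Su.mpr hrb)⟩⟩
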